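/- arXiv:2309.00765 — 4 statements merged into one kernel-verified Lean document; each statement's English description precedes it below -/
import Mathlib

section
/- Conversely, if x in P = {x : Ax = b, x >= 0} and the columns of A indexed by supp(x) are linearly independent, then x is an extreme point of P. -/
/-!
If `x ∈ openSegment y z` with `y, z ∈ P`, nonnegativity forces `y` and `z` to vanish wherever `x`
does, so `y` and `z` are both supported on `supp x`. As `A *ᵥ y = b = A *ᵥ z`, they are two
representations of `b` by the columns indexed by `supp x`; independence of those columns gives
`y = z`, and then `x ∈ openSegment y y = {y}`.
-/

open Matrix Function

theorem eq_zero_of_zero_mem_openSegment {𝕜 : Type*} [Semiring 𝕜] [PartialOrder 𝕜]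
    [IsOrderedRing 𝕜] [NoZeroDivisors 𝕜] {a b : 𝕜} (ha : 0 ≤ a) (hb : 0 ≤ b)
    (h : 0 ∈ openSegment 𝕜 a b) : a = 0 := by
  obtain ⟨s, t, hs, ht, -, hst⟩ := h
  rw [smul_eq_mul, smul_eq_mul] at hst
  have hsa : s * a = 0 :=
    ((add_eq_zero_iff_of_nonneg (mul_nonneg hs.le ha) (mul_nonneg ht.le hb)).1 hst).1
  exact (mul_eq_zero.1 hsa).resolve_left hs.ne'

theorem support_subset_of_mem_openSegment {ι 𝕜 : Type*} [Semiring 𝕜] [PartialOrder 𝕜]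
    [IsOrderedRing 𝕜] [NoZeroDivisors 𝕜] {x y z : ι → 𝕜} (hy : 0 ≤ y) (hz : 0 ≤ z)
    (hx : x ∈ openSegment 𝕜 y z) : support y ⊆ support x := by
  intro i hyi hxi
  have hi : x i ∈ openSegment 𝕜 (y i) (z i) := Pi.openSegment_subset y z hx i (Set.mem_univ i)
  exact hyi (eq_zero_of_zero_mem_openSegment (hy i) (hz i) (hxi ▸ hi))

theorem Matrix.linearCombination_transpose_eq_mulVec {R m n : Type*} [CommSemiring R] [Fintype n]
    (A : Matrix m n R) (v : n → R) :
    Finsupp.linearCombination R (fun i => Aᵀ i) (Finsupp.equivFunOnFinite.symm v) = A *ᵥ v := by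
  rw [Finsupp.linearCombination_apply, Finsupp.sum_fintype _ _ (by simp)]
  ext j
  simp [mulVec, dotProduct, mul_comm]

theorem Matrix.eq_of_mulVec_eq_of_support_subset {R m n : Type*} [CommSemiring R] [Fintype n]
    {A : Matrix m n R} {s : Set n} (hA : LinearIndepOn R (fun i => Aᵀ i) s) {v w : n → R}
    (hv : support v ⊆ s) (hw : support w ⊆ s) (h : A *ᵥ v = A *ᵥ w) : v = w := by
  have hsupp : ∀ u : n → R, support u ⊆ s →
      Finsupp.equivFunOnFinite.symm u ∈ Finsupp.supported R R s := fun u hu =>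
    (Finsupp.mem_supported' R _).2 fun i hi => notMem_support.1 fun hui => hi (hu hui)
  have := linearIndepOn_iffₛ.1 hA _ (hsupp v hv) _ (hsupp w hw)
    (by rw [linearCombination_transpose_eq_mulVec, linearCombination_transpose_eq_mulVec, h])
  exact Finsupp.equivFunOnFinite.symm.injective this

/-- Conversely, if `x ∈ P = {x : A x = b, x ≥ 0}` and the columns of `A`
indexed by the support of `x` are linearly independent, then `x` is an
extreme point of `P`. -/
theorem linearIndependent_support_cols_extremePoint (m n : ℕ)
    (A : Matrix (Fin m) (Fin n) ℝ) (b : Fin m → ℝ)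
    (P : Set (Fin n → ℝ))
    (hP : P = {x : Fin n → ℝ | A *ᵥ x = b ∧ 0 ≤ x})
    (x : Fin n → ℝ) (hxP : x ∈ P)
    (hli : LinearIndependent ℝ (fun i : {i : Fin n // x i ≠ 0} => Aᵀ i.val)) :
    x ∈ Set.extremePoints ℝ P := by
  subst hP
  refine mem_extremePoints_iff_left.2 ⟨hxP, ?_⟩
  rintro y ⟨hyA, hy0⟩ z ⟨hzA, hz0⟩ hx
  have hyz : y = z :=
    eq_of_mulVec_eq_of_support_subset (s := support x) hli
      (support_subset_of_mem_openSegment hy0 hz0 hx)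
      (support_subset_of_mem_openSegment hz0 hy0 (openSegment_symm ℝ y z ▸ hx))
      (hyA.trans hzA.symm)
  subst hyz
  rw [openSegment_same] at hx
  exact hx.symm
end

section
/- Let \phi_1 = 1_n/\sqrt{n}, \phi_2, ..., \phi_n be an orthonormal basis of R^n, 1 in J \subseteq [n], and a >= 0 with \sum_i a_i = 1 and \phi_j^T a = 0 for all j in J\{1}. Then for any f in R^n, |(1/n)\sum_{i in [n]} f(i) - \sum_{i in [n]} a_i f(i)| <= \sum_{i in [n]} a_i |\sum_{j in J-complement} \phi_j(i)(\phi_j^T f)|. -/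
open Matrix Finset

/-!
Expand `f` in the orthonormal basis and split the expansion along `J` and `Jᶜ`. Pairing with `a`,
the `J`-part only sees the `φ₁`-coefficients because `a` is orthogonal to the other `φⱼ`, `j ∈ J`,
and `(φ₁ ⬝ᵥ a) (φ₁ ⬝ᵥ f) = (1/n) ∑ f` since `∑ a = 1`. So the error is exactly
`∑ᵢ aᵢ (∑_{j ∈ Jᶜ} φⱼ(i) (φⱼ ⬝ᵥ f))`, and the triangle inequality with `a ≥ 0` bounds it.
-/

namespace Matrix

section Expansion

variable {ι R : Type*} [Fintype ι] [CommRing R] {φ : Matrix ι ι R}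

theorem sum_mul_sum_mul_dotProduct (J : Finset ι) (a f : ι → R) :
    ∑ i, a i * ∑ j ∈ J, φ j i * (φ j ⬝ᵥ f) = ∑ j ∈ J, (φ j ⬝ᵥ a) * (φ j ⬝ᵥ f) := by
  simp_rw [mul_sum, dotProduct, sum_mul]
  rw [sum_comm]
  exact sum_congr rfl fun j _ => sum_congr rfl fun i _ => by ring

variable [DecidableEq ι]

theorem mul_transpose_eq_one_of_dotProduct
    (horth : ∀ j k, φ j ⬝ᵥ φ k = if j = k then (1 : R) else 0) : φ * φᵀ = 1 := by
  ext j k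
  simpa [mul_apply', one_apply] using horth j k

theorem sum_mul_dotProduct_eq_self (hφ : φ * φᵀ = 1) (f : ι → R) (i : ι) :
    ∑ j, φ j i * (φ j ⬝ᵥ f) = f i := by
  change (φᵀ *ᵥ (φ *ᵥ f)) i = f i
  rw [mulVec_mulVec, mul_eq_one_comm.mp hφ, one_mulVec]

theorem dotProduct_eq_sum_add_sum_compl (hφ : φ * φᵀ = 1) (J : Finset ι) (a f : ι → R) :
    a ⬝ᵥ f = ∑ j ∈ J, (φ j ⬝ᵥ a) * (φ j ⬝ᵥ f) + ∑ i, a i * ∑ j ∈ Jᶜ, φ j i * (φ j ⬝ᵥ f) := by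
  calc a ⬝ᵥ f
      = ∑ i, a i * (∑ j ∈ J, φ j i * (φ j ⬝ᵥ f) + ∑ j ∈ Jᶜ, φ j i * (φ j ⬝ᵥ f)) := by
        simp_rw [sum_add_sum_compl, sum_mul_dotProduct_eq_self hφ, dotProduct]
    _ = _ := by rw [← sum_mul_sum_mul_dotProduct J a f, ← sum_add_distrib]; simp_rw [mul_add]

end Expansion

theorem const_dotProduct {ι R : Type*} [Fintype ι] [CommSemiring R] (c : R) (v : ι → R) :
    (fun _ => c) ⬝ᵥ v = c * ∑ i, v i := by
  simp [dotProduct, mul_sum]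

theorem abs_dotProduct_le_of_nonneg {ι : Type*} [Fintype ι] {a : ι → ℝ} (ha : 0 ≤ a)
    (g : ι → ℝ) : |a ⬝ᵥ g| ≤ ∑ i, a i * |g i| :=
  (abs_sum_le_sum_abs _ _).trans_eq <|
    sum_congr rfl fun i _ => by rw [abs_mul, abs_of_nonneg (ha i)]

end Matrix

/-- Parametric bound on the absolute integration error:
`|(1/n)∑ᵢ f(i) - ∑ᵢ aᵢ f(i)| ≤ ∑ᵢ aᵢ |∑_{j ∈ Jᶜ} φⱼ(i)(φⱼᵀf)|`. -/
theorem parametric_error_bound (n : ℕ) (hn : 0 < n)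
    (φ : Fin n → (Fin n → ℝ))
    (horth : ∀ j k, φ j ⬝ᵥ φ k = if j = k then (1 : ℝ) else 0)
    (hφ0 : φ ⟨0, hn⟩ = fun _ => 1 / Real.sqrt n)
    (J : Finset (Fin n)) (hJ : (⟨0, hn⟩ : Fin n) ∈ J)
    (a : Fin n → ℝ) (ha : 0 ≤ a)
    (hsum : ∑ i, a i = 1)
    (haJ : ∀ j ∈ J, j ≠ ⟨0, hn⟩ → φ j ⬝ᵥ a = 0)
    (f : Fin n → ℝ) :
    |((1 : ℝ) / n) * ∑ i, f i - ∑ i, a i * f i| ≤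
      ∑ i, a i * |∑ j ∈ Jᶜ, φ j i * (φ j ⬝ᵥ f)| := by
  have hsplit := dotProduct_eq_sum_add_sum_compl (mul_transpose_eq_one_of_dotProduct horth) J a f
  rw [sum_eq_single_of_mem _ hJ fun j hj hne => by rw [haJ j hj hne, zero_mul]] at hsplit
  have hmean : (φ ⟨0, hn⟩ ⬝ᵥ a) * (φ ⟨0, hn⟩ ⬝ᵥ f) = (1 : ℝ) / n * ∑ i, f i := by
    rw [hφ0, const_dotProduct, const_dotProduct, hsum, mul_one, ← mul_assoc, ← sq, div_pow,
      Real.sq_sqrt n.cast_nonneg, one_pow]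
  change |_ - a ⬝ᵥ f| ≤ _
  rw [hsplit, hmean, sub_add_cancel_left, abs_neg]
  exact abs_dotProduct_le_of_nonneg ha _
end

section
/- Under the hypotheses of the parametric error bound, if additionally sqrt(\sum_{j in J-complement} (\phi_j^T f)^2) <= 1, then |(1/n)\sum_i f(i) - \sum_i a_i f(i)| <= \sum_{i in [n]} a_i sqrt(\sum_{j in J-complement} \phi_j(i)^2). -/
open Matrix Finset

/-!
Expanding in the basis `φ`, Parseval gives `∑ᵢ aᵢ f(i) = ∑ⱼ (φⱼᵀa)(φⱼᵀf)`. On `J` only `j = 1`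
survives, and it contributes the mean of `f`; so the error is the sum over `Jᶜ`, which after
exchanging the sums reads `∑ᵢ aᵢ ∑_{j ∈ Jᶜ} φⱼ(i) (φⱼᵀf)`. Cauchy–Schwarz on the inner sum and the
energy bound on `f` finish the proof.
-/

lemma Real.abs_sum_mul_le_sqrt_mul_sqrt {ι : Type*} (s : Finset ι) (x y : ι → ℝ) :
    |∑ i ∈ s, x i * y i| ≤ √(∑ i ∈ s, x i ^ 2) * √(∑ i ∈ s, y i ^ 2) := by
  rw [← Real.sqrt_sq_eq_abs, ← Real.sqrt_mul (sum_nonneg fun _ _ ↦ sq_nonneg _)]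
  exact Real.sqrt_le_sqrt (sum_mul_sq_le_sq_mul_sq s x y)

section OrthonormalBasis

variable {ι : Type*} [Fintype ι] {φ : ι → ι → ℝ}

lemma transpose_mul_self_eq_one_of_orthonormal [DecidableEq ι]
    (horth : ∀ j k, φ j ⬝ᵥ φ k = if j = k then (1 : ℝ) else 0) :
    (Matrix.of φ)ᵀ * Matrix.of φ = 1 := by
  refine mul_eq_one_comm.mp (Matrix.ext fun j k ↦ ?_)
  simpa [Matrix.mul_apply, dotProduct, Matrix.one_apply] using horth j k

lemma sum_dotProduct_mul_dotProduct_of_orthonormal [DecidableEq ι]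
    (horth : ∀ j k, φ j ⬝ᵥ φ k = if j = k then (1 : ℝ) else 0) (a f : ι → ℝ) :
    ∑ j, (φ j ⬝ᵥ a) * (φ j ⬝ᵥ f) = a ⬝ᵥ f := by
  change (Matrix.of φ *ᵥ a) ⬝ᵥ (Matrix.of φ *ᵥ f) = a ⬝ᵥ f
  rw [dotProduct_mulVec, ← vecMul_transpose, vecMul_vecMul,
    transpose_mul_self_eq_one_of_orthonormal horth, vecMul_one]

lemma sum_dotProduct_mul_eq_sum_mul_sum (s : Finset ι) (a c : ι → ℝ) :
    ∑ j ∈ s, (φ j ⬝ᵥ a) * c j = ∑ i, a i * ∑ j ∈ s, φ j i * c j := by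
  simp only [dotProduct, sum_mul, mul_sum]
  rw [sum_comm]
  exact sum_congr rfl fun i _ ↦ sum_congr rfl fun j _ ↦ by ring

variable {i₀ : ι} {c : ℝ} {J : Finset ι} {a : ι → ℝ}

lemma sum_dotProduct_mul_dotProduct_eq_sq_mul_sum (hφ₀ : φ i₀ = fun _ ↦ c) (hJ : i₀ ∈ J)
    (hsum : ∑ i, a i = 1) (haJ : ∀ j ∈ J, j ≠ i₀ → φ j ⬝ᵥ a = 0) (f : ι → ℝ) :
    ∑ j ∈ J, (φ j ⬝ᵥ a) * (φ j ⬝ᵥ f) = c ^ 2 * ∑ i, f i := by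
  rw [sum_eq_single_of_mem i₀ hJ fun j hj hne ↦ by rw [haJ j hj hne, zero_mul], hφ₀]
  simp only [dotProduct, ← mul_sum, hsum]
  ring

lemma sq_mul_sum_sub_weighted_sum_eq_neg_sum_compl [DecidableEq ι]
    (horth : ∀ j k, φ j ⬝ᵥ φ k = if j = k then (1 : ℝ) else 0) (hφ₀ : φ i₀ = fun _ ↦ c)
    (hJ : i₀ ∈ J) (hsum : ∑ i, a i = 1) (haJ : ∀ j ∈ J, j ≠ i₀ → φ j ⬝ᵥ a = 0) (f : ι → ℝ) :
    c ^ 2 * ∑ i, f i - ∑ i, a i * f i = -∑ i, a i * ∑ j ∈ Jᶜ, φ j i * (φ j ⬝ᵥ f) := by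
  have hsplit := sum_add_sum_compl J fun j ↦ (φ j ⬝ᵥ a) * (φ j ⬝ᵥ f)
  rw [sum_dotProduct_mul_dotProduct_eq_sq_mul_sum hφ₀ hJ hsum haJ,
    sum_dotProduct_mul_dotProduct_of_orthonormal horth, sum_dotProduct_mul_eq_sum_mul_sum] at hsplit
  change _ + _ = ∑ i, a i * f i at hsplit
  linarith

end OrthonormalBasis

/-- Nonparametric bound: if the energy of `f` outside `J` is at most 1, then
`|(1/n)∑ᵢ f(i) - ∑ᵢ aᵢ f(i)| ≤ ∑ᵢ aᵢ √(∑_{j ∈ Jᶜ} φⱼ(i)²)`. -/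
theorem nonparametric_error_bound (n : ℕ) (hn : 0 < n)
    (φ : Fin n → (Fin n → ℝ))
    (horth : ∀ j k, φ j ⬝ᵥ φ k = if j = k then (1 : ℝ) else 0)
    (hφ0 : φ ⟨0, hn⟩ = fun _ => 1 / Real.sqrt n)
    (J : Finset (Fin n)) (hJ : (⟨0, hn⟩ : Fin n) ∈ J)
    (a : Fin n → ℝ) (ha : 0 ≤ a)
    (hsum : ∑ i, a i = 1)
    (haJ : ∀ j ∈ J, j ≠ ⟨0, hn⟩ → φ j ⬝ᵥ a = 0)
    (f : Fin n → ℝ)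
    (hf : Real.sqrt (∑ j ∈ Jᶜ, (φ j ⬝ᵥ f) ^ 2) ≤ 1) :
    |((1 : ℝ) / n) * ∑ i, f i - ∑ i, a i * f i| ≤
      ∑ i, a i * Real.sqrt (∑ j ∈ Jᶜ, (φ j i) ^ 2) := by
  have hmean : (1 : ℝ) / n = (1 / √n) ^ 2 := by
    rw [div_pow, one_pow, Real.sq_sqrt n.cast_nonneg]
  rw [hmean, sq_mul_sum_sub_weighted_sum_eq_neg_sum_compl horth hφ0 hJ hsum haJ, abs_neg]
  refine (abs_sum_le_sum_abs _ _).trans (sum_le_sum fun i _ ↦ ?_)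
  rw [abs_mul, abs_of_nonneg (ha i)]
  refine mul_le_mul_of_nonneg_left ?_ (ha i)
  calc |∑ j ∈ Jᶜ, φ j i * (φ j ⬝ᵥ f)|
      ≤ √(∑ j ∈ Jᶜ, φ j i ^ 2) * √(∑ j ∈ Jᶜ, (φ j ⬝ᵥ f) ^ 2) :=
        Real.abs_sum_mul_le_sqrt_mul_sqrt _ _ _
    _ ≤ √(∑ j ∈ Jᶜ, φ j i ^ 2) := mul_le_of_le_one_right (Real.sqrt_nonneg _) hf
end

section
/- For any subset J \subseteq [n] with 1 in J and any k >= |J|, there exists a J-graphical design (S, a) with a >= 0, nonzero, and |S| = |supp(a)| <= k; i.e., the feasibility system requiring \sum_i a_i \phi_1(i) = (1/n)\sum_i \phi_1(i), \sum_i a_i \phi_j(i) = 0 for j in J\{1}, a >= 0, and |supp(a)| <= k has a solution. -/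
/-!
Every `φ j` with `j ≠ 0` is orthogonal to the constant vector `φ 0`, so it sums to zero. Hence the
origin is the barycentre of the points `xᵢ = (φ j i)_{j ∈ J \ {0}}` of a space of dimension
`|J| - 1`, and Carathéodory's theorem writes it as a convex combination of at most `|J|` of them.
Those convex weights are the design: summing to `1` is exactly the condition for `φ 0`.
-/

open Matrix Finset

theorem Finset.sum_fiberwise_smul {R M ι κ : Type*} [Semiring R] [AddCommMonoid M] [Module R M]
    [Fintype ι] [Fintype κ] [DecidableEq ι] (g : κ → ι) (w : κ → R) (F : ι → M) :
    ∑ i, (∑ k with g k = i, w k) • F i = ∑ k, w k • F (g k) := by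
  rw [← Finset.sum_fiberwise univ g (fun k => w k • F (g k))]
  refine Finset.sum_congr rfl fun i _ => ?_
  rw [Finset.sum_smul]
  exact Finset.sum_congr rfl fun k hk => by rw [(Finset.mem_filter.1 hk).2]

section Caratheodory

variable {𝕜 E ι : Type*} [Field 𝕜] [LinearOrder 𝕜] [IsStrictOrderedRing 𝕜]
  [AddCommGroup E] [Module 𝕜 E] [Fintype ι]

theorem zero_mem_convexHull_range_of_sum_eq_zero [Nonempty ι] {x : ι → E}
    (hx : ∑ i, x i = 0) : (0 : E) ∈ convexHull 𝕜 (Set.range x) := by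
  have hmem := univ.centerMass_mem_convexHull (fun _ _ => zero_le_one (α := 𝕜))
    (by simpa using Fintype.card_pos) (fun i _ => Set.mem_range_self (f := x) i)
  simpa [Finset.centerMass, hx] using hmem

theorem exists_sparse_weights_of_mem_convexHull [FiniteDimensional 𝕜 E] {x : ι → E} {p : E}
    (hp : p ∈ convexHull 𝕜 (Set.range x)) :
    ∃ a : ι → 𝕜, 0 ≤ a ∧ ∑ i, a i = 1 ∧ ∑ i, a i • x i = p ∧
      #{i | a i ≠ 0} ≤ Module.finrank 𝕜 E + 1 := by
  classical
  obtain ⟨κ, _, z, w, hz, hindep, hw, hw1, hwp⟩ := eq_pos_convex_span_of_mem_convexHull hp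
  choose g hg using fun k => hz (Set.mem_range_self k)
  refine ⟨fun i => ∑ k with g k = i, w k, fun i => ?_, ?_, ?_, ?_⟩
  · exact Finset.sum_nonneg fun k _ => (hw k).le
  · exact (Finset.sum_fiberwise univ g w).trans hw1
  · exact (Finset.sum_fiberwise_smul g w x).trans (by simp only [hg, hwp])
  · calc #{i | ∑ k with g k = i, w k ≠ 0} ≤ #(univ.image g) := by
          refine Finset.card_le_card fun i hi => ?_
          obtain ⟨k, hk, -⟩ := Finset.exists_ne_zero_of_sum_ne_zero (Finset.mem_filter.1 hi).2
          exact Finset.mem_image.2 ⟨k, Finset.mem_univ k, (Finset.mem_filter.1 hk).2⟩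
      _ ≤ Fintype.card κ := Finset.card_image_le
      _ ≤ Module.finrank 𝕜 (vectorSpan 𝕜 (Set.range z)) + 1 := hindep.card_le_finrank_succ
      _ ≤ Module.finrank 𝕜 E + 1 := by grw [Submodule.finrank_le]

end Caratheodory

/-- For any `J` containing the index of the constant eigenvector and any
`k ≥ |J|`, there exists a `J`-graphical design with nonnegative, nonzero
weights supported on at most `k` nodes. -/
theorem sparse_design_exists (n : ℕ) (hn : 0 < n)
    (φ : Fin n → (Fin n → ℝ))
    (horth : ∀ j k, φ j ⬝ᵥ φ k = if j = k then (1 : ℝ) else 0)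
    (hφ0 : φ ⟨0, hn⟩ = fun _ => 1 / Real.sqrt n)
    (J : Finset (Fin n)) (hJ : (⟨0, hn⟩ : Fin n) ∈ J)
    (k : ℕ) (hk : J.card ≤ k) :
    ∃ a : Fin n → ℝ, 0 ≤ a ∧ a ≠ 0 ∧
      φ ⟨0, hn⟩ ⬝ᵥ a = ((1 : ℝ) / n) * ∑ i, φ ⟨0, hn⟩ i ∧
      (∀ j ∈ J, j ≠ ⟨0, hn⟩ → φ j ⬝ᵥ a = 0) ∧
      (Finset.univ.filter (fun i => a i ≠ 0)).card ≤ k := by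
  set j₀ : Fin n := ⟨0, hn⟩
  have : Nonempty (Fin n) := ⟨j₀⟩
  have hsum : ∀ j ≠ j₀, ∑ i, φ j i = 0 := fun j hj => by
    have h := horth j j₀
    rw [if_neg hj, hφ0] at h
    simpa [dotProduct, ← Finset.sum_mul, hn.ne'] using h
  let x : Fin n → (J.erase j₀ → ℝ) := fun i j => φ j i
  have hx : ∑ i, x i = 0 := funext fun j => by
    simpa [x, Finset.sum_apply] using hsum j (Finset.ne_of_mem_erase j.2)
  obtain ⟨a, ha0, ha1, hax, hcard⟩ := exists_sparse_weights_of_mem_convexHull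
    (zero_mem_convexHull_range_of_sum_eq_zero (𝕜 := ℝ) hx)
  refine ⟨a, ha0, fun h => by simp [h] at ha1, ?_, fun j hj hj₀ => ?_, ?_⟩
  · rw [hφ0]
    simp only [dotProduct, one_div, ← Finset.mul_sum, ha1, mul_one, Finset.sum_const,
      Finset.card_univ, Fintype.card_fin, nsmul_eq_mul]
    field_simp
  · simpa [x, Finset.sum_apply, dotProduct, mul_comm] using
      congrFun hax ⟨j, Finset.mem_erase.2 ⟨hj₀, hj⟩⟩
  · have hdim : Module.finrank ℝ (J.erase j₀ → ℝ) + 1 = #J := by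
      rw [Module.finrank_fintype_fun_eq_card, Fintype.card_coe, Finset.card_erase_add_one hJ]
    omega
end
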